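/- Under the hypotheses of Lemma 1 (general position, |I(P)| ≥ 3, every consecutive hull triple nonempty, |H(q) ∩ B(P)| = 1 for all hull edges q q⁺ of I(P)), for every hull vertex p_j of P the set Q_j = B(P \ {p_j}) ∩ I(P) has exactly 2 elements. -/

import Mathlib

/-- Points of the plane. -/
abbrev Pt := ℝ × ℝ

/-- A finite point set is in general position if no three of its points are collinear. -/
def GenPos (P : Finset Pt) : Prop :=
  ∀ p ∈ P, ∀ q ∈ P, ∀ r ∈ P, p ≠ q → q ≠ r → p ≠ r → ¬ Collinear ℝ ({p, q, r} : Set Pt)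

open Classical in
/-- The vertices of the convex hull of `P`. -/
noncomputable def hullB (P : Finset Pt) : Finset Pt :=
  P.filter (fun p => p ∉ convexHull ℝ ((P : Set Pt) \ {p}))

open Classical in
/-- The interior points of `P` (the points that are not hull vertices). -/
noncomputable def intI (P : Finset Pt) : Finset Pt := P \ hullB P

/-- A closed convex polygon with vertices in `P`. -/
def IsPolygonOn (P : Finset Pt) (C : Set Pt) : Prop :=
  ∃ V : Finset Pt, V ⊆ P ∧ 3 ≤ V.card ∧ C = convexHull ℝ (V : Set Pt)

/-- A convex decomposition of a region `R` with respect to `P`: closed convex polygons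
with vertices in `P`, pairwise disjoint interiors, union `R`, and no point of `P`
in the interior of any polygon. -/
def IsConvexDecompOfRegion (P : Finset Pt) (R : Set Pt) (D : Finset (Set Pt)) : Prop :=
  (∀ C ∈ D, IsPolygonOn P C) ∧
  (∀ C ∈ D, ∀ C' ∈ D, C ≠ C' → interior C ∩ interior C' = ∅) ∧
  (⋃ C ∈ D, C) = R ∧
  (∀ C ∈ D, ∀ p ∈ P, (p : Pt) ∉ interior C)

/-- A convex decomposition of the point set `P`. -/
def IsConvexDecomp (P : Finset Pt) (D : Finset (Set Pt)) : Prop :=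
  IsConvexDecompOfRegion P (convexHull ℝ (P : Set Pt)) D

/-- `uMin P` is the minimum number of polygons in a convex decomposition of `P`. -/
noncomputable def uMin (P : Finset Pt) : ℕ :=
  sInf {n | ∃ D : Finset (Set Pt), IsConvexDecomp P D ∧ D.card = n}

/-- `p` and `q` are the endpoints of an edge of the convex hull of `P`. -/
def IsHullEdge (P : Finset Pt) (p q : Pt) : Prop :=
  p ∈ hullB P ∧ q ∈ hullB P ∧ p ≠ q ∧
    segment ℝ p q ⊆ frontier (convexHull ℝ (P : Set Pt))

/-- `H` is the open half-plane with `q` and `q'` on its boundary containing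
no point of `I` (the outer half-plane of the edge `q q'` of `CH(I)`). -/
def IsOuterHalf (I : Finset Pt) (q q' : Pt) (H : Set Pt) : Prop :=
  ∃ f : Pt →ₗ[ℝ] ℝ, f ≠ 0 ∧ f q = f q' ∧ H = {x | f q < f x} ∧ ∀ r ∈ I, f r ≤ f q

/-- The angular domain at `a` bounded by the rays from `a` through `b` and through `c`,
containing the segment `b c`. -/
def angDom (a b c : Pt) : Set Pt :=
  {x | ∃ s t : ℝ, 0 ≤ s ∧ 0 ≤ t ∧ x = a + s • (b - a) + t • (c - a)}

/-- Every triangle of three consecutive hull vertices of `P` contains a point of `P`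
in its interior. -/
def TripleFilled (P : Finset Pt) : Prop :=
  ∀ a p c : Pt, IsHullEdge P a p → IsHullEdge P p c → a ≠ c →
    (interior (convexHull ℝ ({a, p, c} : Set Pt)) ∩ (P : Set Pt)).Nonempty

/-- Every outer open half-plane of a hull edge of `I(P)` contains exactly one
hull vertex of `P`. -/
def OuterOne (P : Finset Pt) : Prop :=
  ∀ q q' H, IsHullEdge (intI P) q q' → IsOuterHalf (intI P) q q' H →
    ((hullB P : Set Pt) ∩ H).ncard = 1

/-! Since `p_j` is a hull vertex of `P`, it lies outside `CH(I(P))`. Rotating a line separating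
`p_j` from `CH(I(P))` about a vertex of `CH(I(P))` until it hits a second interior point yields an
edge `q q'` of `CH(I(P))` whose outer half-plane contains `p_j`. By hypothesis `p_j` is the only
hull vertex of `P` in that half-plane, so all of `P \ {p_j}` lies on the closed inner side of the
line `q q'`, which by general position meets `P` only in `q` and `q'`. Hence `q` and `q'` are both
hull vertices of `P \ {p_j}`, and `|Q_j| ≥ 2`. -/

open Module

section LevelSet

variable {k V : Type*} [Field k] [AddCommGroup V] [Module k V]

theorem collinear_of_forall_apply_eq [FiniteDimensional k V] (hV : finrank k V = 2)
    {f : V →ₗ[k] k} (hf : f ≠ 0) {s : Set V} {c : k} (hs : ∀ p ∈ s, f p = c) : Collinear k s := by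
  rw [collinear_iff_finrank_le_one]
  have hspan : vectorSpan k s ≤ LinearMap.ker f := by
    rw [vectorSpan_def, Submodule.span_le]
    rintro _ ⟨x, hx, y, hy, rfl⟩
    simp [hs x hx, hs y hy]
  have hker := Module.Dual.finrank_ker_add_one_of_ne_zero hf
  have := Submodule.finrank_mono hspan
  omega

theorem exists_ne_zero_apply_eq (hV : 1 < finrank k V) (p q : V) :
    ∃ f : V →ₗ[k] k, f ≠ 0 ∧ f p = f q := by
  have hlt : k ∙ (p - q) < ⊤ := by
    refine Submodule.lt_top_of_finrank_lt_finrank (lt_of_le_of_lt ?_ hV)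
    simpa using finrank_span_le_card (R := k) ({p - q} : Set V)
  obtain ⟨f, hf, hle⟩ := (k ∙ (p - q)).exists_le_ker_of_lt_top hlt
  refine ⟨f, hf, sub_eq_zero.1 ?_⟩
  rw [← map_sub]
  exact hle (Submodule.mem_span_singleton_self _)

end LevelSet

theorem Finset.mem_convexHull_filter_apply_eq {E : Type*} [AddCommGroup E] [Module ℝ E]
    {S : Finset E} {f : E →ₗ[ℝ] ℝ} {c : ℝ} (hS : ∀ s ∈ S, f s ≤ c) {x : E}
    (hx : x ∈ convexHull ℝ (S : Set E)) (hfx : f x = c) :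
    x ∈ convexHull ℝ (S.filter (f · = c) : Set E) := by
  obtain ⟨w, hw0, hw1, rfl⟩ := Finset.mem_convexHull'.1 hx
  have hdefect : ∑ y ∈ S, w y * (c - f y) = 0 := by
    simp only [map_sum, map_smul, smul_eq_mul] at hfx
    simp only [mul_sub, Finset.sum_sub_distrib, ← Finset.sum_mul, hw1, one_mul, hfx, sub_self]
  have hsupp : ∀ y ∈ S, w y ≠ 0 → f y = c := fun y hy hwy => by
    have := (Finset.sum_eq_zero_iff_of_nonneg fun y hy =>
      mul_nonneg (hw0 y hy) (sub_nonneg.2 (hS y hy))).1 hdefect y hy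
    linarith [(mul_eq_zero.1 this).resolve_left hwy]
  refine Finset.mem_convexHull'.2 ⟨w, fun y hy => hw0 y (Finset.mem_filter.1 hy).1, ?_, ?_⟩
  · rwa [Finset.sum_filter_of_ne hsupp]
  · exact Finset.sum_filter_of_ne fun y hy hne => hsupp y hy fun h => hne (by simp [h])

theorem notMem_interior_of_forall_apply_le {E : Type*} [NormedAddCommGroup E] [NormedSpace ℝ E]
    [FiniteDimensional ℝ E] {f : E →ₗ[ℝ] ℝ} (hf : f ≠ 0) {A : Set E} {x : E}
    (hA : ∀ y ∈ A, f y ≤ f x) : x ∉ interior A := fun hx => by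
  have hx' : x ∈ interior (f ⁻¹' Set.Iic (f x)) := interior_mono hA hx
  have hopen := f.isOpenMap_of_finiteDimensional (LinearMap.surjective hf)
  rw [← hopen.preimage_interior_eq_interior_preimage f.continuous_of_finiteDimensional,
    interior_Iic] at hx'
  exact lt_irrefl (f x) hx'

theorem exists_add_mul_eq_zero_and_forall_le {ι : Type*} (S : Finset ι) (a b : ι → ℝ)
    (ha : ∀ i ∈ S, a i ≤ 0) (hb : ∃ i ∈ S, b i ≠ 0) :
    ∃ t : ℝ, ∃ i ∈ S, a i + t * b i = 0 ∧ ∀ j ∈ S, a j + t * b j ≤ 0 := by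
  suffices key : ∀ b : ι → ℝ, (∃ i ∈ S, 0 < b i) →
      ∃ t : ℝ, ∃ i ∈ S, a i + t * b i = 0 ∧ ∀ j ∈ S, a j + t * b j ≤ 0 by
    obtain ⟨i, hi, hbi⟩ := hb
    rcases hbi.lt_or_gt with hneg | hpos
    · obtain ⟨t, i, hi, hzero, hle⟩ := key (-b) ⟨i, hi, neg_pos.2 hneg⟩
      exact ⟨-t, i, hi, by simpa using hzero, fun j hj => by simpa using hle j hj⟩
    · exact key b ⟨i, hi, hpos⟩
  rintro b ⟨i, hi, hbi⟩
  -- `t` is where the first of the increasing lines `s ↦ a j + s * b j` reaches `0`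
  obtain ⟨i₀, hi₀, hmin⟩ := (S.filter (0 < b ·)).exists_min_image (fun j => -a j / b j)
    ⟨i, Finset.mem_filter.2 ⟨hi, hbi⟩⟩
  obtain ⟨hi₀S, hbi₀⟩ := Finset.mem_filter.1 hi₀
  refine ⟨-a i₀ / b i₀, i₀, hi₀S, by field_simp; ring, fun j hj => ?_⟩
  have ht : 0 ≤ -a i₀ / b i₀ := div_nonneg (neg_nonneg.2 (ha i₀ hi₀S)) hbi₀.le
  rcases lt_or_ge 0 (b j) with hbj | hbj
  · have := hmin j (Finset.mem_filter.2 ⟨hj, hbj⟩)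
    rw [le_div_iff₀ hbj] at this
    linarith
  · nlinarith [ha j hj]

theorem finrank_pt : finrank ℝ Pt = 2 := by
  simp

open Classical in
theorem mem_hullB {P : Finset Pt} {p : Pt} :
    p ∈ hullB P ↔ p ∈ P ∧ p ∉ convexHull ℝ ((P : Set Pt) \ {p}) :=
  Finset.mem_filter

theorem mem_intI {P : Finset Pt} {p : Pt} : p ∈ intI P ↔ p ∈ P ∧ p ∉ hullB P :=
  Finset.mem_sdiff

theorem intI_subset_erase {P : Finset Pt} {p : Pt} (hp : p ∈ hullB P) : intI P ⊆ P.erase p :=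
  fun _ hr => Finset.mem_erase.2 ⟨fun e => (mem_intI.1 hr).2 (e ▸ hp), (mem_intI.1 hr).1⟩

theorem notMem_convexHull_intI {P : Finset Pt} {p : Pt} (hp : p ∈ hullB P) :
    p ∉ convexHull ℝ (intI P : Set Pt) := fun h => by
  refine (mem_hullB.1 hp).2 (convexHull_mono ?_ h)
  rw [← Finset.coe_erase]
  exact Finset.coe_subset.2 (intI_subset_erase hp)

namespace GenPos

variable {S : Finset Pt}

theorem mono {T : Finset Pt} (hST : S ⊆ T) (hT : GenPos T) : GenPos S :=
  fun p hp q hq r hr => hT p (hST hp) q (hST hq) r (hST hr)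

theorem eq_or_eq_of_apply_eq (hS : GenPos S) {f : Pt →ₗ[ℝ] ℝ} (hf : f ≠ 0) {x y z : Pt}
    (hx : x ∈ S) (hy : y ∈ S) (hz : z ∈ S) (hxy : x ≠ y) (hfy : f y = f x) (hfz : f z = f x) :
    z = x ∨ z = y := by
  by_contra! hne
  refine hS x hx y hy z hz hxy (Ne.symm hne.2) (Ne.symm hne.1)
    (collinear_of_forall_apply_eq finrank_pt hf (c := f x) ?_)
  simp [hfy, hfz]

end GenPos

theorem mem_hullB_of_forall_apply_le {S : Finset Pt} (hS : GenPos S) {f : Pt →ₗ[ℝ] ℝ}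
    (hf : f ≠ 0) {q q' : Pt} (hq : q ∈ S) (hq' : q' ∈ S) (hne : q ≠ q') (hfq : f q = f q')
    (hle : ∀ s ∈ S, f s ≤ f q) : q ∈ hullB S := by
  refine mem_hullB.2 ⟨hq, fun hmem => hne ?_⟩
  rw [← Finset.coe_erase] at hmem
  have hface := Finset.mem_convexHull_filter_apply_eq
    (fun s hs => hle s (Finset.mem_of_mem_erase hs)) hmem rfl
  have hline : ((S.erase q).filter (f · = f q) : Set Pt) ⊆ {q'} := by
    intro s hs
    obtain ⟨⟨hsq, hsS⟩, hfs⟩ := by simpa using hs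
    exact (hS.eq_or_eq_of_apply_eq hf hq hq' hsS hne hfq.symm hfs).resolve_left hsq
  simpa using convexHull_mono hline hface

theorem isHullEdge_of_forall_apply_le {S : Finset Pt} (hS : GenPos S) {f : Pt →ₗ[ℝ] ℝ}
    (hf : f ≠ 0) {q q' : Pt} (hq : q ∈ S) (hq' : q' ∈ S) (hne : q ≠ q') (hfq : f q = f q')
    (hle : ∀ s ∈ S, f s ≤ f q) : IsHullEdge S q q' := by
  refine ⟨mem_hullB_of_forall_apply_le hS hf hq hq' hne hfq hle,
    mem_hullB_of_forall_apply_le hS hf hq' hq hne.symm hfq.symm (hfq ▸ hle), hne, ?_⟩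
  intro x hx
  have hfx : f x = f q := (convex_hyperplane f.isLinear (f q)).segment_subset rfl hfq.symm hx
  have hhull : ∀ y ∈ convexHull ℝ (S : Set Pt), f y ≤ f x := fun y hy =>
    hfx ▸ convexHull_min hle (convex_halfSpace_le f.isLinear (f q)) hy
  rw [(S.finite_toSet.isClosed_convexHull (𝕜 := ℝ)).frontier_eq]
  exact ⟨segment_subset_convexHull hq hq' hx, notMem_interior_of_forall_apply_le hf hhull⟩

theorem exists_supporting_edge {I : Finset Pt} {b : Pt} (hgp : GenPos (insert b I))
    (hcard : 2 ≤ I.card) (hb : b ∉ convexHull ℝ (I : Set Pt)) :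
    ∃ q ∈ I, ∃ q' ∈ I, q ≠ q' ∧ ∃ f : Pt →ₗ[ℝ] ℝ,
      f q = f q' ∧ (∀ r ∈ I, f r ≤ f q) ∧ f q < f b := by
  have hbI : b ∉ I := fun h => hb (subset_convexHull ℝ _ h)
  obtain ⟨g, u, hgI, hgb⟩ := geometric_hahn_banach_closed_point (convex_convexHull ℝ _)
    (I.finite_toSet.isClosed_convexHull (𝕜 := ℝ)) hb
  obtain ⟨q, hq, hqmax⟩ := I.exists_max_image (fun r => g r) (Finset.card_pos.1 (by omega))
  have hgq : g q < g b := (hgI q (subset_convexHull ℝ _ hq)).trans hgb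
  -- `f = g + t • h` rotates the level line of `g` through `q` about `q`; since `h q = h b`,
  -- `b` stays strictly above it for every `t`
  obtain ⟨h, hh, hhq⟩ := exists_ne_zero_apply_eq (finrank_pt ▸ one_lt_two) q b
  have hmove : ∃ r ∈ I.erase q, h r - h q ≠ 0 := by
    obtain ⟨r, hr, hrq⟩ := Finset.exists_mem_ne hcard q
    refine ⟨r, Finset.mem_erase.2 ⟨hrq, hr⟩, fun h0 => ?_⟩
    have hqb : q ≠ b := fun h => hbI (h ▸ hq)
    rcases hgp.eq_or_eq_of_apply_eq hh (Finset.mem_insert_of_mem hq) (Finset.mem_insert_self b I)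
      (Finset.mem_insert_of_mem hr) hqb hhq.symm (sub_eq_zero.1 h0) with rfl | rfl
    exacts [hrq rfl, hbI hr]
  obtain ⟨t, q', hq', hzero, hle⟩ := exists_add_mul_eq_zero_and_forall_le (I.erase q)
    (fun r => g r - g q) (fun r => h r - h q)
    (fun r hr => sub_nonpos.2 (hqmax r (Finset.mem_of_mem_erase hr))) hmove
  refine ⟨q, hq, q', Finset.mem_of_mem_erase hq', (Finset.ne_of_mem_erase hq').symm,
    g.toLinearMap + t • h, ?_, fun r hr => ?_, ?_⟩ <;>
    simp only [LinearMap.add_apply, LinearMap.smul_apply, ContinuousLinearMap.coe_coe,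
      smul_eq_mul]
  · linear_combination -hzero
  · rcases eq_or_ne r q with rfl | hrq
    · exact le_rfl
    · linarith [hle r (Finset.mem_erase.2 ⟨hrq, hr⟩)]
  · rw [hhq]
    linarith

theorem forall_apply_le_of_outerOne {P : Finset Pt} (ho : OuterOne P) {f : Pt →ₗ[ℝ] ℝ}
    (hf : f ≠ 0) {q q' : Pt} (hedge : IsHullEdge (intI P) q q') (hfq : f q = f q')
    (hfI : ∀ r ∈ intI P, f r ≤ f q) {p : Pt} (hp : p ∈ hullB P) (hfp : f q < f p) :
    ∀ s ∈ P.erase p, f s ≤ f q := by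
  have hone := ho q q' _ hedge ⟨f, hf, hfq, rfl, hfI⟩
  intro s hs
  obtain ⟨hsp, hsP⟩ := Finset.mem_erase.1 hs
  by_cases hsB : s ∈ hullB P
  · by_contra! hlt
    exact hsp ((Set.ncard_le_one ((hullB P).finite_toSet.inter_of_left _)).1 hone.le
      s ⟨hsB, hlt⟩ p ⟨hp, hfp⟩)
  · exact hfI s (mem_intI.2 ⟨hsP, hsB⟩)

theorem Qj_card_two_general (P : Finset Pt) (hgp : GenPos P)
    (hi : 3 ≤ (intI P).card) (ho : OuterOne P)
    (hle : ∀ pj ∈ hullB P, (hullB (P.erase pj) ∩ intI P).card ≤ 2) :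
    ∀ pj ∈ hullB P, (hullB (P.erase pj) ∩ intI P).card = 2 := by
  intro pj hpj
  have hIP : intI P ⊆ P := Finset.sdiff_subset
  obtain ⟨q, hq, q', hq', hne, f, hfq, hfI, hfpj⟩ := exists_supporting_edge
    (hgp.mono (Finset.insert_subset (mem_hullB.1 hpj).1 hIP)) (by omega)
    (notMem_convexHull_intI hpj)
  have hf : f ≠ 0 := by rintro rfl; simp at hfpj
  have hbelow := forall_apply_le_of_outerOne ho hf
    (isHullEdge_of_forall_apply_le (hgp.mono hIP) hf hq hq' hne hfq hfI) hfq hfI hpj hfpj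
  have hgp' : GenPos (P.erase pj) := hgp.mono (Finset.erase_subset pj P)
  have hIQ := intI_subset_erase hpj
  refine le_antisymm (hle pj hpj) (Finset.one_lt_card.2 ⟨q, ?_, q', ?_, hne⟩)
  · exact Finset.mem_inter.2
      ⟨mem_hullB_of_forall_apply_le hgp' hf (hIQ hq) (hIQ hq') hne hfq hbelow, hq⟩
  · exact Finset.mem_inter.2 ⟨mem_hullB_of_forall_apply_le hgp' hf (hIQ hq') (hIQ hq) hne.symm
      hfq.symm (hfq ▸ hbelow), hq'⟩

/-- Under the hypotheses of Lemma 1 together with `|Q_j| ≤ 2` for all `j`, every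
`Q_j = B(P \ {p_j}) ∩ I(P)` has exactly two elements. -/
theorem Qj_card_two (P : Finset Pt) (hgp : GenPos P)
    (hi : 3 ≤ (intI P).card) (htf : TripleFilled P) (ho : OuterOne P)
    (hle : ∀ pj ∈ hullB P, (hullB (P.erase pj) ∩ intI P).card ≤ 2) :
    ∀ pj ∈ hullB P, (hullB (P.erase pj) ∩ intI P).card = 2 :=
  Qj_card_two_general P hgp hi ho hle
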